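/- arXiv:2603.04624 — 3 statements merged into one kernel-verified Lean document; each statement's English description precedes it below -/
import Mathlib

section
/- Let V and W be bounded antichain-decomposable persistence modules over ℝ^d. Then the erosion distance satisfies d_E(rk_V, rk_W) = max( sup_{I ∈ Seg_{V,W}} ℰ_V(I), sup_{I ∈ Seg_{W,V}} ℰ_W(I) ), where suprema over the empty set are 0. -/
open CategoryTheory CategoryTheory.Limits

noncomputable section

/-- Two elements `p q` of a subset `S` of a poset are order-connected in `S` if there is a
finite sequence of elements of `S` from `p` to `q` with consecutive terms comparable. -/
def OrderConnIn {P : Type} [PartialOrder P] (S : Set P) (p q : P) : Prop :=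
  p ∈ S ∧ Relation.ReflTransGen (fun a b => b ∈ S ∧ (a ≤ b ∨ b ≤ a)) p q

/-- A subset `S` of a poset is convex if `p ≤ r ≤ q` with `p, q ∈ S` implies `r ∈ S`. -/
def IsConvexSubset {P : Type} [PartialOrder P] (S : Set P) : Prop :=
  ∀ ⦃p r q : P⦄, p ∈ S → q ∈ S → p ≤ r → r ≤ q → r ∈ S

/-- An interval of a poset: a convex subset any two of whose elements are order-connected. -/
def IsPosetInterval {P : Type} [PartialOrder P] (S : Set P) : Prop :=
  IsConvexSubset S ∧ ∀ p ∈ S, ∀ q ∈ S, OrderConnIn S p q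

open Classical in
/-- The submodule of `F` which is everything at points of `I` and zero elsewhere. -/
def indSub (F : Type) [Field F] {P : Type} (I : Set P) (p : P) : Submodule F F :=
  if p ∈ I then ⊤ else ⊥

open Classical in
/-- The canonical map between submodules of `F`: the inclusion when it exists, zero otherwise. -/
def indMap (F : Type) [Field F] (S T : Submodule F F) : S →ₗ[F] T :=
  if h : S ≤ T then Submodule.inclusion h else 0

theorem indSub_subsingleton {F : Type} [Field F] {P : Type} {I : Set P} {p : P}
    (hp : p ∉ I) : Subsingleton (indSub F I p) := by
  rw [indSub, if_neg hp]
  infer_instance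

theorem indMap_comp (F : Type) [Field F] {P : Type} [PartialOrder P] {I : Set P}
    (hI : IsConvexSubset I) {p q r : P} (hpq : p ≤ q) (hqr : q ≤ r) :
    (indMap F (indSub F I q) (indSub F I r)).comp (indMap F (indSub F I p) (indSub F I q))
      = indMap F (indSub F I p) (indSub F I r) := by
  by_cases hp : p ∈ I
  · by_cases hr : r ∈ I
    · have hq : q ∈ I := hI hp hr hpq hqr
      have h1 : indSub F I p ≤ indSub F I q := by simp [indSub, hp, hq]
      have h2 : indSub F I q ≤ indSub F I r := by simp [indSub, hq, hr]
      have h3 : indSub F I p ≤ indSub F I r := h1.trans h2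
      simp only [indMap, dif_pos h1, dif_pos h2, dif_pos h3]
      ext x
      rfl
    · haveI := indSub_subsingleton (F := F) (I := I) hr
      exact LinearMap.ext fun x => Subsingleton.elim _ _
  · haveI := indSub_subsingleton (F := F) (I := I) hp
    apply LinearMap.ext
    intro x
    rw [Subsingleton.elim x 0]
    simp

/-- The indicator persistence module of a convex subset `I` of a poset `P`: it assigns `F` to
points of `I` and `0` to other points, with identity structure maps between points of `I` and
zero maps otherwise. -/
def indicatorModule (F : Type) [Field F] {P : Type} [PartialOrder P] (I : Set P)
    (hI : IsConvexSubset I) : P ⥤ ModuleCat.{0} F where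
  obj p := ModuleCat.of F (indSub F I p)
  map {p q} f := ModuleCat.ofHom (indMap F (indSub F I p) (indSub F I q))
  map_id p := by
    apply ModuleCat.hom_ext
    change indMap F (indSub F I p) (indSub F I p) = LinearMap.id
    simp only [indMap, dif_pos le_rfl]
    ext x
    rfl
  map_comp {p q r} f g := by
    apply ModuleCat.hom_ext
    change indMap F (indSub F I p) (indSub F I r) = (indMap F (indSub F I q) (indSub F I r)).comp
      (indMap F (indSub F I p) (indSub F I q))
    rw [indMap_comp F hI f.le g.le]

/-- The support of a persistence module: the points where it is nonzero. -/
def suppMod (F : Type) [Field F] {P : Type} [PartialOrder P] (V : P ⥤ ModuleCat.{0} F) :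
    Set P := {p | Nontrivial (V.obj p)}

/-- The rank of the structure map of `V` associated to `p ≤ q`. -/
def rankMap (F : Type) [Field F] {P : Type} [PartialOrder P] (V : P ⥤ ModuleCat.{0} F)
    {p q : P} (h : p ≤ q) : ℕ :=
  Module.finrank F (LinearMap.range (V.map (homOfLE h)).hom)

/-- A persistence module is antichain-decomposable if it is isomorphic to a direct sum of
indicator modules of intervals whose elements are pairwise incomparable across distinct
summands. -/
def IsACD (F : Type) [Field F] {P : Type} [PartialOrder P] (V : P ⥤ ModuleCat.{0} F) : Prop :=
  ∃ (A : Type) (S : A → Set P) (hS : ∀ α, IsPosetInterval (S α)),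
    (∀ ⦃α β : A⦄, α ≠ β → ∀ p ∈ S α, ∀ q ∈ S β, ¬ p ≤ q ∧ ¬ q ≤ p) ∧
    Nonempty (V ≅ ∐ fun α => indicatorModule F (S α) (hS α).1)

/-- A persistence module is thin if it is pointwise of dimension `0` or `1`. -/
def IsThin (F : Type) [Field F] {P : Type} [PartialOrder P] (V : P ⥤ ModuleCat.{0} F) : Prop :=
  ∀ p : P, Module.rank F (V.obj p) = 0 ∨ Module.rank F (V.obj p) = 1

/-- We regard `ℝ^d` (with the product order) as a poset category. -/
instance (d : ℕ) : CategoryTheory.Category (Fin d → ℝ) := Preorder.smallCategory _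

open Classical in
/-- The rank invariant of `V` on the segment `[p, q]` (junk value `0` when `¬ p ≤ q`). -/
def rkInv (F : Type) [Field F] {d : ℕ} (V : (Fin d → ℝ) ⥤ ModuleCat.{0} F)
    (p q : Fin d → ℝ) : ℕ :=
  if h : p ≤ q then Module.finrank F (LinearMap.range (V.map (homOfLE h)).hom) else 0

/-- The rank invariant of `V` on the `ε`-thickening `[p - ε𝟙, q + ε𝟙]` of the segment `[p, q]`. -/
def rkShift (F : Type) [Field F] {d : ℕ} (V : (Fin d → ℝ) ⥤ ModuleCat.{0} F) (ε : ℝ)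
    (p q : Fin d → ℝ) : ℕ :=
  rkInv F V (fun i => p i - ε) (fun i => q i + ε)

/-- `ε` is a feasible erosion for the pair `(rk_V, rk_W)`: for every segment `[p, q]`,
`rk_V([p, q]^{+ε}) ≤ rk_W([p, q])` and `rk_W([p, q]^{+ε}) ≤ rk_V([p, q])`. -/
def Feasible (F : Type) [Field F] {d : ℕ} (V W : (Fin d → ℝ) ⥤ ModuleCat.{0} F) (ε : ℝ) :
    Prop :=
  ∀ p q : Fin d → ℝ, p ≤ q →
    rkShift F V ε p q ≤ rkInv F W p q ∧ rkShift F W ε p q ≤ rkInv F V p q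

/-- The erosion distance between the rank invariants of `V` and `W`. -/
def erosionDist (F : Type) [Field F] {d : ℕ} (V W : (Fin d → ℝ) ⥤ ModuleCat.{0} F) : ℝ :=
  sInf {ε : ℝ | 0 < ε ∧ Feasible F V W ε}

/-- `ℰ_{V,W}(I)` for the segment `I = [p, q]`. -/
def erosionPair (F : Type) [Field F] {d : ℕ} (V W : (Fin d → ℝ) ⥤ ModuleCat.{0} F)
    (p q : Fin d → ℝ) : ℝ :=
  sInf {ε : ℝ | 0 < ε ∧ rkShift F V ε p q ≤ rkInv F W p q ∧ rkShift F W ε p q ≤ rkInv F V p q}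

/-- `ℰ_V(I)` for the segment `I = [p, q]`. -/
def erosionOne (F : Type) [Field F] {d : ℕ} (V : (Fin d → ℝ) ⥤ ModuleCat.{0} F)
    (p q : Fin d → ℝ) : ℝ :=
  sInf {ε : ℝ | 0 < ε ∧ rkShift F V ε p q = 0}

/-- The segment `[p, q]` belongs to `Seg_{V,W}`, i.e. `rk_V([p, q]) = 1` and
`rk_W([p, q]) = 0`. -/
def SegMem (F : Type) [Field F] {d : ℕ} (V W : (Fin d → ℝ) ⥤ ModuleCat.{0} F)
    (p q : Fin d → ℝ) : Prop :=
  p ≤ q ∧ rkInv F V p q = 1 ∧ rkInv F W p q = 0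

/-- `V(u) ≅ F`. -/
def ptIsLine (F : Type) [Field F] {d : ℕ} (V : (Fin d → ℝ) ⥤ ModuleCat.{0} F)
    (u : Fin d → ℝ) : Prop :=
  Nonempty ((V.obj u) ≃ₗ[F] F)

/-- `ℝ^d_{V,W} = {u ∈ ℝ^d : V(u) ≅ F and W(u) = 0}`. -/
def RVW (F : Type) [Field F] {d : ℕ} (V W : (Fin d → ℝ) ⥤ ModuleCat.{0} F) :
    Set (Fin d → ℝ) :=
  {u | ptIsLine F V u ∧ Subsingleton (W.obj u)}

/-- `ℝ^d_V = {u ∈ ℝ^d : V(u) ≅ F}`. -/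
def RV (F : Type) [Field F] {d : ℕ} (V : (Fin d → ℝ) ⥤ ModuleCat.{0} F) :
    Set (Fin d → ℝ) :=
  {u | ptIsLine F V u}

/-- `ℰ^small_V(p) = sup_{q ≥ p} ℰ_V([p, q])`. -/
def erosionSmall (F : Type) [Field F] {d : ℕ} (V : (Fin d → ℝ) ⥤ ModuleCat.{0} F)
    (p : Fin d → ℝ) : ℝ :=
  sSup {x : ℝ | ∃ q : Fin d → ℝ, p ≤ q ∧ x = erosionOne F V p q}

/-- `ℰ^large_V(q) = sup_{p ≤ q} ℰ_V([p, q])`. -/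
def erosionLarge (F : Type) [Field F] {d : ℕ} (V : (Fin d → ℝ) ⥤ ModuleCat.{0} F)
    (q : Fin d → ℝ) : ℝ :=
  sSup {x : ℝ | ∃ p : Fin d → ℝ, p ≤ q ∧ x = erosionOne F V p q}

/-- `ℰ*(V, W) = max( sup_{p ∈ ℝ^d_{V,W}} ℰ^small_V(p), sup_{q ∈ ℝ^d_{V,W}} ℰ^large_V(q) )`. -/
def erosionStar (F : Type) [Field F] {d : ℕ} (V W : (Fin d → ℝ) ⥤ ModuleCat.{0} F) : ℝ :=
  max (sSup {x : ℝ | ∃ p ∈ RVW F V W, x = erosionSmall F V p})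
      (sSup {x : ℝ | ∃ q ∈ RVW F V W, x = erosionLarge F V q})

/-- A bounded antichain-decomposable module over `ℝ^d`: an ACD module whose support is a
bounded subset of `ℝ^d`. -/
def IsBoundedACD (F : Type) [Field F] {d : ℕ} (V : (Fin d → ℝ) ⥤ ModuleCat.{0} F) : Prop :=
  IsACD F V ∧ Bornology.IsBounded (suppMod F V)

/-! An antichain-decomposable module is thin, since by the antichain condition at most one
interval summand is nonzero at a point. So `rk_V ≤ 1`, and a vanishing rank stays zero on every
thickening. Hence a segment outside `Seg_{V,W}` never violates `rk_V(I^{+ε}) ≤ rk_W(I)`, while one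
inside satisfies it for every `ε > ℰ_V(I)` and for no `ε < ℰ_V(I)`. The feasible `ε` therefore
contain everything above the maximum of the two suprema and nothing below it, provided every
`ℰ_V(I)` is finite: for bounded modules over `ℝ^d`, `d ≥ 1`, thickening by more than half the
diameter of the support kills every rank. Over `ℝ⁰` thickening does nothing, and both sides are
`0`, through the junk value `sInf ∅ = 0`. -/

theorem DirectSum.component_injective_of_subsingleton {R : Type*} [Semiring R] {ι : Type*}
    {M : ι → Type*} [∀ i, AddCommMonoid (M i)] [∀ i, Module R (M i)] (i₀ : ι)
    (h : ∀ i, i ≠ i₀ → Subsingleton (M i)) :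
    Function.Injective (DirectSum.component R ι M i₀) := by
  intro x y hxy
  ext i
  by_cases hi : i = i₀
  · subst hi
    exact hxy
  · exact (h i hi).elim _ _

theorem IsACD.rank_obj_le_one {F : Type} [Field F] {P : Type} [PartialOrder P]
    {V : P ⥤ ModuleCat.{0} F} (hV : IsACD F V) (p : P) : Module.rank F (V.obj p) ≤ 1 := by
  classical
  obtain ⟨A, S, hS, hanti, ⟨e⟩⟩ := hV
  set G := fun α => indicatorModule F (S α) (hS α).1
  let eV : V.obj p ≃ₗ[F] DirectSum A fun α => (G α).obj p :=
    (e.app p ≪≫ sigmaObjIso G p ≪≫ ModuleCat.coprodIsoDirectSum _).toLinearEquiv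
  rw [eV.rank_eq]
  by_cases hp : ∃ α₀, p ∈ S α₀
  · obtain ⟨α₀, hα₀⟩ := hp
    have hsub : ∀ α, α ≠ α₀ → Subsingleton ((G α).obj p) := fun α hα =>
      indSub_subsingleton fun hpα => (hanti hα p hpα p hα₀).1 le_rfl
    calc Module.rank F (DirectSum A fun α => (G α).obj p) ≤ Module.rank F ((G α₀).obj p) :=
          LinearMap.rank_le_of_injective _ (DirectSum.component_injective_of_subsingleton α₀ hsub)
      _ ≤ Module.rank F F := Submodule.rank_le _
      _ = 1 := Module.rank_self F
  · have : ∀ α, Subsingleton ((G α).obj p) := fun α => indSub_subsingleton fun hpα => hp ⟨α, hpα⟩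
    simp [rank_subsingleton']

theorem IsACD.finiteDimensional {F : Type} [Field F] {P : Type} [PartialOrder P]
    {V : P ⥤ ModuleCat.{0} F} (hV : IsACD F V) (p : P) : FiniteDimensional F (V.obj p) :=
  Module.rank_lt_aleph0_iff.mp ((hV.rank_obj_le_one p).trans_lt Cardinal.one_lt_aleph0)

section ErosionDistance

variable {F : Type} [Field F] {d : ℕ} {V W : (Fin d → ℝ) ⥤ ModuleCat.{0} F}

theorem rkInv_le_one (hV : IsACD F V) (p q : Fin d → ℝ) : rkInv F V p q ≤ 1 := by
  unfold rkInv
  split_ifs with hpq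
  · exact Module.finrank_le_of_rank_le ((rank_range_le _).trans (hV.rank_obj_le_one p))
  · exact zero_le_one

theorem mem_suppMod_of_rkInv_ne_zero {a b : Fin d → ℝ} (h : rkInv F V a b ≠ 0) :
    a ∈ suppMod F V ∧ b ∈ suppMod F V := by
  unfold rkInv at h
  split_ifs at h with hab
  · simp only [suppMod, Set.mem_ofPred_eq, ← not_subsingleton_iff_nontrivial]
    constructor <;> intro hs <;> apply h
    · exact Nat.eq_zero_of_le_zero
        ((LinearMap.finrank_range_le _).trans Module.finrank_zero_of_subsingleton.le)
    · exact Nat.eq_zero_of_le_zero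
        ((Submodule.finrank_le _).trans Module.finrank_zero_of_subsingleton.le)
  · exact absurd rfl h

theorem rkInv_eq_zero_of_le_of_le (hV : IsACD F V) {a b c e : Fin d → ℝ} (hab : a ≤ b)
    (hbc : b ≤ c) (hce : c ≤ e) (h : rkInv F V b c = 0) : rkInv F V a e = 0 := by
  have := hV.finiteDimensional b
  rw [rkInv, dif_pos hbc, Submodule.finrank_eq_zero, LinearMap.range_eq_bot] at h
  have hfac : homOfLE (hab.trans (hbc.trans hce)) = homOfLE hab ≫ homOfLE hbc ≫ homOfLE hce := rfl
  rw [rkInv, dif_pos (hab.trans (hbc.trans hce)), hfac, Functor.map_comp, Functor.map_comp,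
    ModuleCat.hom_comp, ModuleCat.hom_comp, h, LinearMap.comp_zero, LinearMap.zero_comp,
    LinearMap.range_zero, finrank_bot]

theorem rkShift_zero (p q : Fin d → ℝ) : rkShift F V 0 p q = rkInv F V p q := by
  simp [rkShift]

theorem rkShift_eq_zero_of_le (hV : IsACD F V) {p q : Fin d → ℝ} (hpq : p ≤ q) {δ ε : ℝ}
    (hδ : 0 ≤ δ) (hδε : δ ≤ ε) (h : rkShift F V δ p q = 0) : rkShift F V ε p q = 0 :=
  rkInv_eq_zero_of_le_of_le hV (fun i => by dsimp only; linarith)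
    (fun i => by have := hpq i; dsimp only; linarith) (fun i => by dsimp only; linarith) h

theorem rkShift_eq_zero_of_diam_lt [Nonempty (Fin d)] (hV : Bornology.IsBounded (suppMod F V))
    {ε : ℝ} (hε : Metric.diam (suppMod F V) < 2 * ε) {p q : Fin d → ℝ} (hpq : p ≤ q) :
    rkShift F V ε p q = 0 := by
  by_contra h
  obtain ⟨hp, hq⟩ := mem_suppMod_of_rkInv_ne_zero h
  obtain ⟨i⟩ := ‹Nonempty (Fin d)›
  have hdist := (dist_le_pi_dist _ _ i).trans (Metric.dist_le_diam_of_mem hV hq hp)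
  rw [Real.dist_eq] at hdist
  linarith [le_abs_self (q i + ε - (p i - ε)), hpq i]

theorem rkShift_of_isEmpty [IsEmpty (Fin d)] (ε : ℝ) (p q : Fin d → ℝ) :
    rkShift F V ε p q = rkInv F V p q := by
  rw [rkShift, Subsingleton.elim (fun i => p i - ε) p, Subsingleton.elim (fun i => q i + ε) q]

theorem erosionOne_nonneg (p q : Fin d → ℝ) : 0 ≤ erosionOne F V p q :=
  Real.sInf_nonneg fun _ hε => hε.1.le

theorem erosionOne_le {p q : Fin d → ℝ} {ε : ℝ} (hε : 0 < ε) (h : rkShift F V ε p q = 0) :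
    erosionOne F V p q ≤ ε :=
  csInf_le ⟨0, fun _ hδ => hδ.1.le⟩ ⟨hε, h⟩

theorem rkShift_eq_zero_of_erosionOne_lt (hV : IsACD F V) {p q : Fin d → ℝ} (hpq : p ≤ q)
    {R ε : ℝ} (hR : 0 < R) (hVR : rkShift F V R p q = 0) (hε : erosionOne F V p q < ε) :
    rkShift F V ε p q = 0 := by
  obtain ⟨δ, ⟨hδ, hδ0⟩, hδε⟩ := exists_lt_of_csInf_lt (by exact ⟨R, hR, hVR⟩) hε
  exact rkShift_eq_zero_of_le hV hpq hδ.le hδε.le hδ0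

theorem Feasible.symm {ε : ℝ} (h : Feasible F V W ε) : Feasible F W V ε :=
  fun p q hpq => (h p q hpq).symm

variable (F V W) in
/-- `{ℰ_V(I) : I ∈ Seg_{V,W}}`. -/
def segErosions : Set ℝ :=
  {x | ∃ p q : Fin d → ℝ, SegMem F V W p q ∧ x = erosionOne F V p q}

theorem sSup_segErosions_nonneg : 0 ≤ sSup (segErosions F V W) :=
  Real.sSup_nonneg <| by
    rintro _ ⟨p, q, -, rfl⟩
    exact erosionOne_nonneg p q

theorem bddAbove_segErosions {R : ℝ} (hR : 0 < R)
    (hVR : ∀ p q : Fin d → ℝ, p ≤ q → rkShift F V R p q = 0) : BddAbove (segErosions F V W) :=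
  ⟨R, by
    rintro _ ⟨p, q, hseg, rfl⟩
    exact erosionOne_le hR (hVR p q hseg.1)⟩

theorem sSup_segErosions_le_of_feasible {ε : ℝ} (hε : 0 < ε) (h : Feasible F V W ε) :
    sSup (segErosions F V W) ≤ ε :=
  Real.sSup_le (by
    rintro _ ⟨p, q, ⟨hpq, -, hW⟩, rfl⟩
    exact erosionOne_le hε (Nat.le_zero.mp (hW ▸ (h p q hpq).1))) hε.le

theorem rkShift_le_rkInv_of_sSup_segErosions_lt (hV : IsACD F V) {R ε : ℝ} (hR : 0 < R)
    (hVR : ∀ p q : Fin d → ℝ, p ≤ q → rkShift F V R p q = 0)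
    (hε : sSup (segErosions F V W) < ε) {p q : Fin d → ℝ} (hpq : p ≤ q) :
    rkShift F V ε p q ≤ rkInv F W p q := by
  rcases Nat.eq_zero_or_pos (rkInv F W p q) with hW | hW
  · rw [hW, Nat.le_zero]
    rcases Nat.eq_zero_or_pos (rkInv F V p q) with hV0 | hV1
    · exact rkShift_eq_zero_of_le hV hpq le_rfl (sSup_segErosions_nonneg.trans hε.le)
        (by rwa [rkShift_zero])
    · have hseg : SegMem F V W p q := ⟨hpq, le_antisymm (rkInv_le_one hV p q) hV1, hW⟩
      exact rkShift_eq_zero_of_erosionOne_lt hV hpq hR (hVR p q hpq)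
        ((le_csSup (bddAbove_segErosions hR hVR) ⟨p, q, hseg, rfl⟩).trans_lt hε)
  · exact (rkInv_le_one hV _ _).trans hW

theorem erosionDist_eq_max_sSup_segErosions (hV : IsACD F V) (hW : IsACD F W) {R : ℝ}
    (hR : 0 < R) (hVR : ∀ p q : Fin d → ℝ, p ≤ q → rkShift F V R p q = 0)
    (hWR : ∀ p q : Fin d → ℝ, p ≤ q → rkShift F W R p q = 0) :
    erosionDist F V W = max (sSup (segErosions F V W)) (sSup (segErosions F W V)) := by
  set M := max (sSup (segErosions F V W)) (sSup (segErosions F W V))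
  have hM : 0 ≤ M := sSup_segErosions_nonneg.trans (le_max_left _ _)
  have hlower : {ε | 0 < ε ∧ Feasible F V W ε} ⊆ Set.Ici M := fun ε ⟨hε, h⟩ =>
    max_le (sSup_segErosions_le_of_feasible hε h) (sSup_segErosions_le_of_feasible hε h.symm)
  have hupper : Set.Ioi M ⊆ {ε | 0 < ε ∧ Feasible F V W ε} := fun ε hε =>
    ⟨hM.trans_lt hε, fun p q hpq =>
      ⟨rkShift_le_rkInv_of_sSup_segErosions_lt hV hR hVR (max_lt_iff.mp hε).1 hpq,
        rkShift_le_rkInv_of_sSup_segErosions_lt hW hR hWR (max_lt_iff.mp hε).2 hpq⟩⟩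
  exact (isGLB_Ioi.of_subset_of_superset isGLB_Ici hupper hlower).csInf_eq
    ⟨M + 1, hupper (lt_add_one M)⟩

theorem erosionDist_eq_zero_of_isEmpty [IsEmpty (Fin d)] : erosionDist F V W = 0 := by
  rcases Set.eq_empty_or_nonempty {ε | 0 < ε ∧ Feasible F V W ε} with h | ⟨ε₀, -, hfeas⟩
  · rw [erosionDist, h, Real.sInf_empty]
  · have h : {ε | 0 < ε ∧ Feasible F V W ε} = Set.Ioi 0 := by
      ext ε
      refine ⟨And.left, fun hε => ⟨hε, fun p q hpq => ?_⟩⟩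
      simpa only [rkShift_of_isEmpty] using hfeas p q hpq
    rw [erosionDist, h, csInf_Ioi]

theorem sSup_segErosions_eq_zero_of_isEmpty [IsEmpty (Fin d)] : sSup (segErosions F V W) = 0 := by
  have h : ∀ x ∈ segErosions F V W, x = 0 := by
    rintro _ ⟨p, q, ⟨-, hV, -⟩, rfl⟩
    have hempty : {ε : ℝ | 0 < ε ∧ rkShift F V ε p q = 0} = ∅ := by
      simp [rkShift_of_isEmpty, hV]
    rw [erosionOne, hempty, Real.sInf_empty]
  exact le_antisymm (Real.sSup_nonpos fun x hx => (h x hx).le)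
    (Real.sSup_nonneg fun x hx => (h x hx).ge)

end ErosionDistance

/-- the erosion distance between bounded ACD modules over `ℝ^d` equals the
maximum of the suprema of `ℰ_V` over `Seg_{V,W}` and of `ℰ_W` over `Seg_{W,V}`. -/
theorem erosion_dist_eq_max_sup (F : Type) [Field F] {d : ℕ}
    (V W : (Fin d → ℝ) ⥤ ModuleCat.{0} F)
    (hV : IsBoundedACD F V) (hW : IsBoundedACD F W) :
    erosionDist F V W =
      max (sSup {x : ℝ | ∃ p q : Fin d → ℝ, SegMem F V W p q ∧ x = erosionOne F V p q})
          (sSup {x : ℝ | ∃ p q : Fin d → ℝ, SegMem F W V p q ∧ x = erosionOne F W p q}) := by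
  change _ = max (sSup (segErosions F V W)) (sSup (segErosions F W V))
  rcases isEmpty_or_nonempty (Fin d) with hd | hd
  · rw [erosionDist_eq_zero_of_isEmpty, sSup_segErosions_eq_zero_of_isEmpty,
      sSup_segErosions_eq_zero_of_isEmpty, max_self]
  · have hdV := Metric.diam_nonneg (s := suppMod F V)
    have hdW := Metric.diam_nonneg (s := suppMod F W)
    exact erosionDist_eq_max_sSup_segErosions hV.1 hW.1
      (R := (Metric.diam (suppMod F V) + Metric.diam (suppMod F W)) / 2 + 1) (by positivity)
      (fun _ _ => rkShift_eq_zero_of_diam_lt hV.2 (by linarith))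
      (fun _ _ => rkShift_eq_zero_of_diam_lt hW.2 (by linarith))

end
end

section
/- Let V and W be pointwise finite-dimensional rank-maximal persistence modules over ℝ^d with bounded support, let M bound their pointwise dimensions, and let ε > 0. Then ε satisfies rk_V(I^{+ε}) ≤ rk_W(I) and rk_W(I^{+ε}) ≤ rk_V(I) for all segments I (i.e. ε is a feasible erosion for the pair (rk_V, rk_W)) if and only if for every i ∈ {1, …, M}, ε is a feasible erosion for the pair (rk_{V^(i)}, rk_{W^(i)}) of superlevel modules. -/
open CategoryTheory CategoryTheory.Limits

noncomputable section

/-- A persistence module is rank-maximal if the rank of each structure map is the minimum of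
the dimensions of its domain and codomain. -/
def RankMaximal (F : Type) [Field F] {P : Type} [PartialOrder P] (V : P ⥤ ModuleCat.{0} F) :
    Prop :=
  ∀ ⦃p q : P⦄ (h : p ≤ q),
    rankMap F V h = min (Module.finrank F (V.obj p)) (Module.finrank F (V.obj q))

/-- The `i`-th superlevel set of a persistence module: the points of dimension at least `i`. -/
def suppLevel (F : Type) [Field F] {P : Type} [PartialOrder P] (V : P ⥤ ModuleCat.{0} F)
    (i : ℕ) : Set P := {p | i ≤ Module.finrank F (V.obj p)}

theorem suppLevel_convex (F : Type) [Field F] {P : Type} [PartialOrder P]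
    (V : P ⥤ ModuleCat.{0} F) (hfd : ∀ p, FiniteDimensional F (V.obj p))
    (hrm : RankMaximal F V) (i : ℕ) : IsConvexSubset (suppLevel F V i) := by
  intro p r q hp hq hpr hrq
  haveI := hfd r
  haveI := hfd q
  have hfac : V.map (homOfLE (hpr.trans hrq)) = V.map (homOfLE hpr) ≫ V.map (homOfLE hrq) := by
    rw [← V.map_comp]
    rfl
  have h1 : rankMap F V (hpr.trans hrq) ≤ Module.finrank F (V.obj r) := by
    rw [rankMap, hfac]
    calc Module.finrank F (LinearMap.range (V.map (homOfLE hpr) ≫ V.map (homOfLE hrq)).hom)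
        ≤ Module.finrank F (LinearMap.range (V.map (homOfLE hrq)).hom) :=
          Submodule.finrank_mono (LinearMap.range_comp_le_range (V.map (homOfLE hpr)).hom
            (V.map (homOfLE hrq)).hom)
      _ ≤ Module.finrank F (V.obj r) := LinearMap.finrank_range_le _
  exact le_trans (le_trans (le_min hp hq) (hrm (hpr.trans hrq)).ge) h1

/-- The `i`-th superlevel module of a rank-maximal pointwise finite-dimensional persistence
module: the indicator module of the `i`-th superlevel set. -/
def superMod (F : Type) [Field F] {P : Type} [PartialOrder P] (V : P ⥤ ModuleCat.{0} F)
    (hfd : ∀ p, FiniteDimensional F (V.obj p)) (hrm : RankMaximal F V) (i : ℕ) :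
    P ⥤ ModuleCat.{0} F :=
  indicatorModule F (suppLevel F V i) (suppLevel_convex F V hfd hrm i)

/-! Rank-maximality makes `rk_V [p, q] = min (dim V p) (dim V q)`, so the superlevel module
`V^(i)` has rank `1` on `[p, q]` exactly when `i ≤ rk_V [p, q]`, and `0` otherwise. Hence every
inequality `rk_V I ≤ rk_W J` between ranks bounded by `M` splits into the `M` inequalities
`rk_{V^(i)} I ≤ rk_{W^(i)} J`, which is the theorem segment by segment. -/

theorem Nat.le_iff_forall_mem_Icc_one_imp {a b M : ℕ} (ha : a ≤ M) :
    a ≤ b ↔ ∀ i ∈ Finset.Icc 1 M, i ≤ a → i ≤ b := by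
  refine ⟨fun hab i _ hia => hia.trans hab, fun h => ?_⟩
  rcases Nat.eq_zero_or_pos a with rfl | ha0
  · exact Nat.zero_le b
  · exact h a (Finset.mem_Icc.2 ⟨ha0, ha⟩) le_rfl

section

variable {F : Type} [Field F]

open Classical in
theorem finrank_indSub {P : Type} (I : Set P) (p : P) :
    Module.finrank F (indSub F I p) = if p ∈ I then 1 else 0 := by
  rw [indSub]
  by_cases h : p ∈ I
  · rw [if_pos h, if_pos h, finrank_top, Module.finrank_self]
  · rw [if_neg h, if_neg h, finrank_bot]

open Classical in
theorem rankMap_indicatorModule {P : Type} [PartialOrder P] {I : Set P}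
    (hI : IsConvexSubset I) {p q : P} (h : p ≤ q) :
    rankMap F (indicatorModule F I hI) h = if p ∈ I ∧ q ∈ I then 1 else 0 := by
  change Module.finrank F (LinearMap.range (indMap F (indSub F I p) (indSub F I q))) = _
  split_ifs with hpq
  · obtain ⟨hp, hq⟩ := hpq
    have hle : indSub F I p ≤ indSub F I q := by simp [indSub, hp, hq]
    rw [indMap, dif_pos hle, LinearMap.finrank_range_of_inj (Submodule.inclusion_injective hle),
      finrank_indSub, if_pos hp]
  · rcases not_and_or.1 hpq with hp | hq
    · simpa [finrank_indSub, hp] using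
        LinearMap.finrank_range_le (indMap F (indSub F I p) (indSub F I q))
    · simpa [finrank_indSub, hq] using
        Submodule.finrank_le (LinearMap.range (indMap F (indSub F I p) (indSub F I q)))

variable {d : ℕ} (V W : (Fin d → ℝ) ⥤ ModuleCat.{0} F)

theorem rkInv_eq_min (hrm : RankMaximal F V) {p q : Fin d → ℝ} (h : p ≤ q) :
    rkInv F V p q = min (Module.finrank F (V.obj p)) (Module.finrank F (V.obj q)) := by
  rw [rkInv, dif_pos h]
  exact hrm h

theorem rkInv_le_of_forall_finrank_le (hrm : RankMaximal F V) {M : ℕ}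
    (hM : ∀ p, Module.finrank F (V.obj p) ≤ M) (p q : Fin d → ℝ) : rkInv F V p q ≤ M := by
  by_cases h : p ≤ q
  · exact (rkInv_eq_min V hrm h).trans_le ((min_le_left _ _).trans (hM p))
  · simp [rkInv, h]

open Classical in
theorem rkInv_superMod (hfd : ∀ p, FiniteDimensional F (V.obj p)) (hrm : RankMaximal F V)
    {i : ℕ} (hi : 0 < i) (p q : Fin d → ℝ) :
    rkInv F (superMod F V hfd hrm i) p q = if i ≤ rkInv F V p q then 1 else 0 := by
  by_cases h : p ≤ q
  · rw [rkInv, dif_pos h, rkInv_eq_min V hrm h]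
    exact (rankMap_indicatorModule _ h).trans
      (if_congr (show i ≤ _ ∧ i ≤ _ ↔ _ from le_min_iff.symm) rfl rfl)
  · simp [rkInv, h, hi.ne']

theorem rkInv_le_iff_forall_superMod (hfdV : ∀ p, FiniteDimensional F (V.obj p))
    (hfdW : ∀ p, FiniteDimensional F (W.obj p)) (hrmV : RankMaximal F V)
    (hrmW : RankMaximal F W) {M : ℕ} (hMV : ∀ p, Module.finrank F (V.obj p) ≤ M)
    (p q p' q' : Fin d → ℝ) :
    rkInv F V p q ≤ rkInv F W p' q' ↔ ∀ i ∈ Finset.Icc 1 M,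
      rkInv F (superMod F V hfdV hrmV i) p q ≤ rkInv F (superMod F W hfdW hrmW i) p' q' := by
  rw [Nat.le_iff_forall_mem_Icc_one_imp (rkInv_le_of_forall_finrank_le V hrmV hMV p q)]
  refine forall₂_congr fun i hi => ?_
  have hi0 : 0 < i := (Finset.mem_Icc.1 hi).1
  rw [rkInv_superMod V hfdV hrmV hi0, rkInv_superMod W hfdW hrmW hi0]
  split_ifs <;> simp_all

end

theorem feasible_iff_superlevel_feasible_general (F : Type) [Field F] {d : ℕ}
    (V W : (Fin d → ℝ) ⥤ ModuleCat.{0} F)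
    (hfdV : ∀ p, FiniteDimensional F (V.obj p)) (hfdW : ∀ p, FiniteDimensional F (W.obj p))
    (hrmV : RankMaximal F V) (hrmW : RankMaximal F W)
    (M : ℕ)
    (hMV : ∀ p, Module.finrank F (V.obj p) ≤ M) (hMW : ∀ p, Module.finrank F (W.obj p) ≤ M)
    (ε : ℝ) :
    Feasible F V W ε ↔
      ∀ i ∈ Finset.Icc 1 M,
        Feasible F (superMod F V hfdV hrmV i) (superMod F W hfdW hrmW i) ε := by
  simp only [Feasible, rkShift, rkInv_le_iff_forall_superMod V W hfdV hfdW hrmV hrmW hMV,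
    rkInv_le_iff_forall_superMod W V hfdW hfdV hrmW hrmV hMW]
  constructor
  · intro h i hi p q hpq
    exact ⟨(h p q hpq).1 i hi, (h p q hpq).2 i hi⟩
  · intro h p q hpq
    exact ⟨fun i hi => (h i hi p q hpq).1, fun i hi => (h i hi p q hpq).2⟩

/-- for pointwise finite-dimensional rank-maximal modules over `ℝ^d` with
bounded support and pointwise dimensions bounded by `M`, a positive `ε` is a feasible erosion
for `(rk_V, rk_W)` if and only if it is a feasible erosion for every pair of superlevel
modules `(rk_{V^(i)}, rk_{W^(i)})`, `i = 1, …, M`. -/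
theorem feasible_iff_superlevel_feasible (F : Type) [Field F] {d : ℕ}
    (V W : (Fin d → ℝ) ⥤ ModuleCat.{0} F)
    (hfdV : ∀ p, FiniteDimensional F (V.obj p)) (hfdW : ∀ p, FiniteDimensional F (W.obj p))
    (hrmV : RankMaximal F V) (hrmW : RankMaximal F W)
    (hbV : Bornology.IsBounded (suppMod F V)) (hbW : Bornology.IsBounded (suppMod F W))
    (M : ℕ)
    (hMV : ∀ p, Module.finrank F (V.obj p) ≤ M) (hMW : ∀ p, Module.finrank F (W.obj p) ≤ M)
    (ε : ℝ) (hε : 0 < ε) :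
    Feasible F V W ε ↔
      ∀ i ∈ Finset.Icc 1 M,
        Feasible F (superMod F V hfdV hrmV i) (superMod F W hfdW hrmW i) ε :=
  feasible_iff_superlevel_feasible_general F V W hfdV hfdW hrmV hrmW M hMV hMW ε

end
end

section
/- Let γ_X = (X, d_X(·)) and γ_Y = (Y, d_Y(·)) be dynamic metric spaces and let δ > 0. Then for every subset X' ⊆ X there exists a subset Y' ⊆ Y with |Y'| ≤ |X'| such that d_dyn(γ_{X'}, γ_{Y'}) ≤ d_dyn(γ_X, γ_Y) + δ, where γ_{X'} and γ_{Y'} denote the restricted dynamic metric spaces. -/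
open CategoryTheory CategoryTheory.Limits

noncomputable section

open scoped ENNReal

/-- A dynamic metric space on a (finite) set `X`: a time-dependent pseudo-metric, continuous
in time. -/
structure DMS (X : Type) where
  d : ℝ → X → X → ℝ
  nonneg : ∀ t x y, 0 ≤ d t x y
  refl : ∀ t x, d t x x = 0
  symm : ∀ t x y, d t x y = d t y x
  triangle : ∀ t x y z, d t x z ≤ d t x y + d t y z
  cont : ∀ x y, Continuous fun t => d t x y

/-- The restriction of a dynamic metric space to a subset. -/
def DMS.restrict {X : Type} (γ : DMS X) (X' : Set X) : DMS X' where
  d t x y := γ.d t x.1 y.1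
  nonneg t x y := γ.nonneg t x.1 y.1
  refl t x := γ.refl t x.1
  symm t x y := γ.symm t x.1 y.1
  triangle t x y z := γ.triangle t x.1 y.1 z.1
  cont x y := γ.cont x.1 y.1

/-- `(⋁_{[t]^{+ε}} d_X)(x, y) = min_{t' ∈ [t-ε, t+ε]} d_X(t')(x, y)`. -/
noncomputable def minWindow {X : Type} (γ : DMS X) (ε t : ℝ) (x y : X) : ℝ :=
  sInf ((fun t' => γ.d t' x y) '' Set.Icc (t - ε) (t + ε))

/-- The tripod `(φX, φY)` is a `(2, ε)`-tripod between `γX` and `γY`. -/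
def IsTwoTripod {X Y Z : Type} (γX : DMS X) (γY : DMS Y) (φX : Z → X) (φY : Z → Y)
    (ε : ℝ) : Prop :=
  ∀ t : ℝ, ∀ z z' : Z,
    minWindow γX ε t (φX z) (φX z') ≤ γY.d t (φY z) (φY z') + 2 * ε ∧
    minWindow γY ε t (φY z) (φY z') ≤ γX.d t (φX z) (φX z') + 2 * ε

/-- The `λ = 2` slack interleaving (generalized Gromov–Hausdorff) distance between dynamic
metric spaces: the infimum over all surjective tripods `R` and all `ε > 0` such that `R` is a
`(2, ε)`-tripod. -/
noncomputable def dDyn {X Y : Type} [Finite X] [Finite Y] (γX : DMS X) (γY : DMS Y) : ℝ≥0∞ :=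
  sInf {c : ℝ≥0∞ | ∃ ε : ℝ, 0 < ε ∧ c = ENNReal.ofReal ε ∧
    ∃ (Z : Type) (φX : Z → X) (φY : Z → Y),
      Function.Surjective φX ∧ Function.Surjective φY ∧ IsTwoTripod γX γY φX φY ε}

/-- for dynamic metric spaces `γX`, `γY` and `δ > 0`, every subset `X' ⊆ X`
admits a subset `Y' ⊆ Y` with `|Y'| ≤ |X'|` and
`d_dyn(γ_{X'}, γ_{Y'}) ≤ d_dyn(γ_X, γ_Y) + δ`. -/
theorem dDyn_subset (X Y : Type) [Finite X] [Finite Y] (γX : DMS X) (γY : DMS Y)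
    (δ : ℝ) (hδ : 0 < δ) (X' : Set X) :
    ∃ Y' : Set Y, Nat.card Y' ≤ Nat.card X' ∧
      dDyn (γX.restrict X') (γY.restrict Y') ≤ dDyn γX γY + ENNReal.ofReal δ := by
  by_cases htop : dDyn γX γY = ⊤
  · exact ⟨∅, by simp, by simp [htop]⟩
  · have hlt : dDyn γX γY < dDyn γX γY + ENNReal.ofReal δ :=
      ENNReal.lt_add_right htop (by simp [hδ])
    obtain ⟨c, hc, hclt⟩ := (sInf_lt_iff).mp hlt
    obtain ⟨ε, hε, rfl, Z, φX, φY, hsX, hsY, htri⟩ := hc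
    -- choose a section of φX
    set g : X → Z := Function.surjInv hsX with hg
    have hgx : ∀ x, φX (g x) = x := fun x => Function.surjInv_eq hsX x
    set f : X → Y := fun x => φY (g x) with hf
    refine ⟨f '' X', ?_, ?_⟩
    · rw [Nat.card_coe_set_eq, Nat.card_coe_set_eq]
      exact Set.ncard_image_le X'.toFinite
    · refine le_trans (sInf_le ?_) hclt.le
      refine ⟨ε, hε, rfl, ↥X', _root_.id,
        fun x => ⟨f x.1, Set.mem_image_of_mem f x.2⟩, Function.surjective_id, ?_, ?_⟩
      · rintro ⟨y, x, hx, rfl⟩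
        exact ⟨⟨x, hx⟩, rfl⟩
      · intro t z z'
        have h := htri t (g z.1) (g z'.1)
        rw [hgx, hgx] at h
        exact h

end
end
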